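/- Let n ≥ 1 and let d be an even integer with 4 ≤ d ≤ 2n+2 (so d ≠ 2). For α, β ∈ F, the deformations (R̃_α, t, j) and (R̃_β, t, j) of R = F[u]/(u^{n+1}) are isomorphic as deformations of R if and only if α = β. -/

import Mathlib

/-- A finite-dimensional graded-commutative ℤ-graded `F`-algebra
("graded F-algebra" in the sense of Seidel's paper). -/
structure GradedFAlg (F : Type) [Field F] where
  carrier : Type
  [ring : Ring carrier]
  [alg : Algebra F carrier]
  grading : ℤ → Submodule F carrier
  [gradedAlgebra : GradedAlgebra grading]
  [findim : FiniteDimensional F carrier]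
  gcomm : ∀ (i j : ℤ) (x y : carrier), x ∈ grading i → y ∈ grading j →
    x * y = ((-1 : F) ^ (i * j)) • (y * x)

attribute [instance] GradedFAlg.ring GradedFAlg.alg GradedFAlg.gradedAlgebra GradedFAlg.findim

variable {F : Type} [Field F]

/-- A homomorphism of graded `F`-algebras. -/
structure GradedFAlg.Hom (A B : GradedFAlg F) where
  toAlgHom : A.carrier →ₐ[F] B.carrier
  graded : ∀ (i : ℤ) (x : A.carrier), x ∈ A.grading i → toAlgHom x ∈ B.grading i

/-- The identity homomorphism of graded `F`-algebras. -/
def GradedFAlg.Hom.id (A : GradedFAlg F) : GradedFAlg.Hom A A :=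
  ⟨AlgHom.id F A.carrier, fun _ _ h => h⟩

/-- A `d`-dimensional (first order infinitesimal) deformation `(R̃, t, j)` of `A`:
`t ∈ R̃^d` with `t² = 0` whose annihilator is exactly `t·R̃`, and `j : R̃ → A`
a surjective homomorphism of graded algebras with kernel `t·R̃`. -/
structure Deformation (F : Type) [Field F] (A : GradedFAlg F) (d : ℤ) where
  alg : GradedFAlg F
  t : alg.carrier
  t_mem : t ∈ alg.grading d
  t_sq : t * t = 0
  t_ann : ∀ x : alg.carrier, t * x = 0 ↔ ∃ y : alg.carrier, x = t * y
  j : GradedFAlg.Hom alg A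
  j_surj : Function.Surjective j.toAlgHom
  j_ker : ∀ x : alg.carrier, j.toAlgHom x = 0 ↔ ∃ y : alg.carrier, x = t * y

/-- A morphism of deformations over a homomorphism `f` of graded `F`-algebras. -/
structure DefMorphismOver {A B : GradedFAlg F} (f : GradedFAlg.Hom A B) {d : ℤ}
    (D1 : Deformation F A d) (D2 : Deformation F B d) where
  toHom : GradedFAlg.Hom D1.alg D2.alg
  map_t : toHom.toAlgHom D1.t = D2.t
  over' : ∀ x, D2.j.toAlgHom (toHom.toAlgHom x) = f.toAlgHom (D1.j.toAlgHom x)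

/-- Two deformations of `A` are isomorphic if there is a bijective morphism of
deformations (i.e. a morphism over the identity of `A`) between them. -/
def Deformation.Iso {A : GradedFAlg F} {d : ℤ} (D1 D2 : Deformation F A d) : Prop :=
  ∃ φ : DefMorphismOver (GradedFAlg.Hom.id A) D1 D2, Function.Bijective φ.toHom.toAlgHom

/-- `R` is (a model of) the cohomology `F[u]/(u^{n+1})` of `ℂPⁿ`: `u` has
degree `2`, `u^{n+1} = 0`, and `1, u, …, uⁿ` is an `F`-basis of `R`. -/
structure IsCPnAlg (R : GradedFAlg F) (u : R.carrier) (n : ℕ) : Prop where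
  u_mem : u ∈ R.grading 2
  u_pow : u ^ (n + 1) = 0
  basis : ∃ b : Module.Basis (Fin (n + 1)) F R.carrier, ∀ i : Fin (n + 1), b i = u ^ (i : ℕ)

/-- The deformation `D` of `R = F[u]/(u^{n+1})` "is" the deformation
`R̃_α = F[ũ, t]/(ũ^{n+1} + α·t·ũ^{n+1-d/2}, t²)` with `j(ũ) = u`, `j(t) = 0`:
it contains an element `ũ` of degree `2` lifting `u` and satisfying the defining
relation. (These data determine `R̃_α` up to isomorphism of deformations.) -/
structure IsRAlphaDef (R : GradedFAlg F) (u : R.carrier) (n : ℕ) (d : ℤ) (α : F)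
    (D : Deformation F R d) (ut : D.alg.carrier) : Prop where
  mem : ut ∈ D.alg.grading 2
  j_u : D.j.toAlgHom ut = u
  rel : ut ^ (n + 1) + α • (D.t * ut ^ ((n : ℤ) + 1 - d / 2).toNat) = 0

/-!
Lifting the basis `1, u, …, uⁿ` of `R` gives the homogeneous basis `ũⁱ, t·ũⁱ` (`i ≤ n`) of
`R̃_α`, because `j` and multiplication by `t` both have kernel `t·R̃`. A morphism of deformations
`R̃_α → R̃_β` sends `ũ` to `ũ`: the difference lies in `t·R̃` and has degree `2`, while `t·R̃`
lives in degrees `≥ d > 2`. Applying it to the defining relation of `R̃_α` gives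
`(α - β)·t·ũᵏ = 0` in `R̃_β`, and `t·ũᵏ ≠ 0` since `k = n + 1 - d/2 ≤ n`.
Conversely, for `α = β` the linear map matching the two bases sends `ũᵃ` and `t·ũᵃ` to their
counterparts for every `a` (beyond `n` both sides are reduced by the same relation), so it is
multiplicative, graded, and compatible with `t` and `j`.
-/

open DirectSum

namespace GradedFAlg

variable {A B : GradedFAlg F} {ι : Type} [Fintype ι]

lemma mem_span_of_mem_grading (b : Module.Basis ι F A.carrier) {deg : ι → ℤ}
    (hb : ∀ i, b i ∈ A.grading (deg i)) {m : ℤ} {x : A.carrier} (hx : x ∈ A.grading m) :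
    x ∈ Submodule.span F (b '' {i | deg i = m}) := by
  rw [← decompose_of_mem_same A.grading hx, ← b.sum_repr x]
  change GradedAlgebra.proj A.grading m _ ∈ _
  simp only [map_sum, map_smul]
  refine Submodule.sum_mem _ fun i _ => Submodule.smul_mem _ _ ?_
  by_cases h : deg i = m
  · rw [GradedAlgebra.proj_apply, decompose_of_mem_same _ (h ▸ hb i)]
    exact Submodule.subset_span ⟨i, h, rfl⟩
  · rw [GradedAlgebra.proj_apply, decompose_of_mem_ne _ (hb i) h]
    exact zero_mem _

lemma grading_eq_bot_of_basis (b : Module.Basis ι F A.carrier) {deg : ι → ℤ}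
    (hb : ∀ i, b i ∈ A.grading (deg i)) {m : ℤ} (hm : ∀ i, deg i ≠ m) : A.grading m = ⊥ := by
  refine eq_bot_iff.2 fun x hx => ?_
  simpa [hm] using mem_span_of_mem_grading b hb hx

lemma map_mem_grading_of_basis (b : Module.Basis ι F A.carrier) {deg : ι → ℤ}
    (hb : ∀ i, b i ∈ A.grading (deg i)) (f : A.carrier →ₗ[F] B.carrier)
    (hf : ∀ i, f (b i) ∈ B.grading (deg i)) {m : ℤ} {x : A.carrier} (hx : x ∈ A.grading m) :
    f x ∈ B.grading m := by
  have hfx := Submodule.mem_map_of_mem (f := f) (mem_span_of_mem_grading b hb hx)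
  rw [Submodule.map_span] at hfx
  refine Submodule.span_le.2 ?_ hfx
  rintro _ ⟨_, ⟨i, rfl, rfl⟩, rfl⟩
  exact hf i

end GradedFAlg

namespace IsCPnAlg

variable {R : GradedFAlg F} {u : R.carrier} {n : ℕ} (hR : IsCPnAlg R u n)
include hR

noncomputable def powBasis : Module.Basis (Fin (n + 1)) F R.carrier := hR.basis.choose

lemma powBasis_apply (i : Fin (n + 1)) : hR.powBasis i = u ^ (i : ℕ) := hR.basis.choose_spec i

lemma finrank_eq : Module.finrank F R.carrier = n + 1 := by
  rw [Module.finrank_eq_card_basis hR.powBasis, Fintype.card_fin]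

lemma linearIndependent_pow : LinearIndependent F (fun i : Fin (n + 1) => u ^ (i : ℕ)) := by
  simpa only [← hR.powBasis_apply] using hR.powBasis.linearIndependent

lemma pow_ne_zero {m : ℕ} (hm : m ≤ n) : u ^ m ≠ 0 := by
  simpa only [hR.powBasis_apply] using hR.powBasis.ne_zero ⟨m, by omega⟩

lemma grading_eq_bot_of_neg {m : ℤ} (hm : m < 0) : R.grading m = ⊥ :=
  GradedFAlg.grading_eq_bot_of_basis hR.powBasis (deg := fun i => (i : ℕ) • (2 : ℤ))
    (fun i => hR.powBasis_apply i ▸ SetLike.pow_mem_graded _ hR.u_mem)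
    (fun i => by simp only [nsmul_eq_mul]; omega)

end IsCPnAlg

namespace Deformation

variable {A : GradedFAlg F} {d : ℤ} (D : Deformation F A d)

lemma j_t : D.j.toAlgHom D.t = 0 :=
  (D.j_ker D.t).2 ⟨1, (mul_one _).symm⟩

lemma t_mul_eq_zero_iff (x : D.alg.carrier) : D.t * x = 0 ↔ D.j.toAlgHom x = 0 :=
  (D.t_ann x).trans (D.j_ker x).symm

lemma commute_t_of_mem_grading {e : ℤ} (he : Even e) {x : D.alg.carrier}
    (hx : x ∈ D.alg.grading e) : Commute D.t x := by
  rw [Commute, SemiconjBy, D.alg.gcomm d e D.t x D.t_mem hx, (he.mul_left d).neg_one_zpow,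
    one_smul]

lemma finrank_eq : Module.finrank F D.alg.carrier = 2 * Module.finrank F A.carrier := by
  have hker_j : LinearMap.ker D.j.toAlgHom.toLinearMap =
      LinearMap.range (LinearMap.mulLeft F D.t) := by
    ext x
    simpa [eq_comm] using D.j_ker x
  have hker_t : LinearMap.ker (LinearMap.mulLeft F D.t) =
      LinearMap.range (LinearMap.mulLeft F D.t) := by
    ext x
    simpa [eq_comm] using D.t_ann x
  have h_j := LinearMap.finrank_range_add_finrank_ker D.j.toAlgHom.toLinearMap
  have h_t := LinearMap.finrank_range_add_finrank_ker (LinearMap.mulLeft F D.t)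
  rw [LinearMap.range_eq_top.2 D.j_surj, finrank_top, hker_j] at h_j
  rw [hker_t] at h_t
  omega

variable {ι : Type} [Fintype ι] {v : ι → D.alg.carrier}

lemma linearIndependent_sumElim (hv : LinearIndependent F (D.j.toAlgHom ∘ v)) :
    LinearIndependent F (Sum.elim v (D.t * v ·)) := by
  have hv' := Fintype.linearIndependent_iff.1 hv
  refine Fintype.linearIndependent_iff.2 fun g hg => ?_
  set B := ∑ i, g (.inr i) • v i
  have hsum : ∑ i, g (.inl i) • v i + D.t * B = 0 := by
    simpa [B, Finset.mul_sum, Fintype.sum_sum_type] using hg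
  have hj := congrArg D.j.toAlgHom hsum
  rw [map_add, map_mul, D.j_t, zero_mul, add_zero, map_zero, map_sum] at hj
  have hinl : ∀ i, g (.inl i) = 0 := hv' _ (by simpa using hj)
  have htB : D.t * B = 0 := by simpa [hinl] using hsum
  have hjB := (D.t_mul_eq_zero_iff B).1 htB
  rw [map_sum] at hjB
  have hinr : ∀ i, g (.inr i) = 0 := hv' _ (by simpa using hjB)
  rintro (i | i)
  exacts [hinl i, hinr i]

noncomputable def liftBasis (hv : LinearIndependent F (D.j.toAlgHom ∘ v))
    (hcard : Fintype.card ι = Module.finrank F A.carrier) :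
    Module.Basis (ι ⊕ ι) F D.alg.carrier :=
  basisOfLinearIndependentOfCardEqFinrank' _ (D.linearIndependent_sumElim hv)
    (by rw [Fintype.card_sum, hcard, D.finrank_eq]; ring)

@[simp]
lemma liftBasis_inl (hv : LinearIndependent F (D.j.toAlgHom ∘ v))
    (hcard : Fintype.card ι = Module.finrank F A.carrier) (i : ι) :
    D.liftBasis hv hcard (.inl i) = v i := by
  simp [liftBasis]

@[simp]
lemma liftBasis_inr (hv : LinearIndependent F (D.j.toAlgHom ∘ v))
    (hcard : Fintype.card ι = Module.finrank F A.carrier) (i : ι) :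
    D.liftBasis hv hcard (.inr i) = D.t * v i := by
  simp [liftBasis]

lemma eq_zero_of_mem_grading {m : ℤ} (hA : A.grading (m - d) = ⊥) {x : D.alg.carrier}
    (hx : x ∈ D.alg.grading m) (hjx : D.j.toAlgHom x = 0) : x = 0 := by
  obtain ⟨y, rfl⟩ := (D.j_ker x).1 hjx
  have hy : D.j.toAlgHom (decompose D.alg.grading y (m - d)) = 0 := by
    simpa [hA] using D.j.graded _ _ (decompose D.alg.grading y (m - d)).2
  rw [← decompose_of_mem_same D.alg.grading hx, ← add_sub_cancel d m,
    coe_decompose_mul_add_of_left_mem _ D.t_mem, (D.t_mul_eq_zero_iff _).2 hy]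

end Deformation

lemma Commute.pow_mul_mul_pow {S : Type*} [Monoid S] {t x : S} (h : Commute t x) (i j : ℕ) :
    x ^ i * (t * x ^ j) = t * x ^ (i + j) := by
  rw [← mul_assoc, ← (h.pow_right i).eq, mul_assoc, ← pow_add]

lemma Commute.mul_pow_mul_mul_pow_eq_zero {S : Type*} [MonoidWithZero S] {t x : S}
    (h : Commute t x) (ht : t * t = 0) (i j : ℕ) : t * x ^ i * (t * x ^ j) = 0 := by
  rw [mul_assoc, h.pow_mul_mul_pow, ← mul_assoc, ht, zero_mul]

namespace IsRAlphaDef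

variable {R : GradedFAlg F} {u : R.carrier} {n : ℕ} {d : ℤ} {α β : F}

section

variable {D : Deformation F R d} {ut : D.alg.carrier} (h : IsRAlphaDef R u n d α D ut)
include h

lemma t_mul_pow_add_eq_zero (m : ℕ) : D.t * ut ^ (n + 1 + m) = 0 := by
  rw [pow_add, ← mul_assoc, eq_neg_of_add_eq_zero_left h.rel, mul_neg, mul_smul_comm,
    ← mul_assoc, D.t_sq, zero_mul, smul_zero, neg_zero, zero_mul]

lemma pow_add_eq (m : ℕ) :
    ut ^ (n + 1 + m) = -(α • (D.t * ut ^ (((n : ℤ) + 1 - d / 2).toNat + m))) := by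
  rw [pow_add, eq_neg_of_add_eq_zero_left h.rel, neg_mul, smul_mul_assoc, mul_assoc, ← pow_add]

variable (hR : IsCPnAlg R u n)
include hR

lemma t_mul_pow_ne_zero (hd : 2 ≤ d) : D.t * ut ^ ((n : ℤ) + 1 - d / 2).toNat ≠ 0 := by
  rw [Ne, D.t_mul_eq_zero_iff, map_pow, h.j_u]
  exact hR.pow_ne_zero (by omega)

lemma map_eq {D' : Deformation F R d} {ut' : D'.alg.carrier} (h' : IsRAlphaDef R u n d β D' ut')
    (hd : 2 < d) (φ : DefMorphismOver (GradedFAlg.Hom.id R) D D') :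
    φ.toHom.toAlgHom ut = ut' := by
  refine sub_eq_zero.1 (D'.eq_zero_of_mem_grading (hR.grading_eq_bot_of_neg (by omega))
    (sub_mem (φ.toHom.graded 2 ut h.mem) h'.mem) ?_)
  rw [map_sub, φ.over', h'.j_u]
  simp [GradedFAlg.Hom.id, h.j_u]

lemma eq_of_morphism {D' : Deformation F R d} {ut' : D'.alg.carrier}
    (h' : IsRAlphaDef R u n d β D' ut') (hd : 2 < d)
    (φ : DefMorphismOver (GradedFAlg.Hom.id R) D D') : α = β := by
  have hrel := congrArg φ.toHom.toAlgHom h.rel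
  rw [map_add, map_pow, map_smul, map_mul, φ.map_t, map_pow, h.map_eq hR h' hd φ,
    map_zero] at hrel
  have hsmul : (α - β) • (D'.t * ut' ^ ((n : ℤ) + 1 - d / 2).toNat) = 0 := by
    rw [sub_smul, ← add_sub_add_left_eq_sub _ _ (ut' ^ (n + 1)), hrel, h'.rel, sub_self]
  exact sub_eq_zero.1 ((smul_eq_zero.1 hsmul).resolve_right (h'.t_mul_pow_ne_zero hR hd.le))

noncomputable def basis : Module.Basis (Fin (n + 1) ⊕ Fin (n + 1)) F D.alg.carrier :=
  D.liftBasis (v := fun i : Fin (n + 1) => ut ^ (i : ℕ))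
    (by simpa [Function.comp_def, h.j_u] using hR.linearIndependent_pow)
    (by rw [Fintype.card_fin, hR.finrank_eq])

@[simp]
lemma basis_inl (i : Fin (n + 1)) : h.basis hR (.inl i) = ut ^ (i : ℕ) := by
  simp [basis]

@[simp]
lemma basis_inr (i : Fin (n + 1)) : h.basis hR (.inr i) = D.t * ut ^ (i : ℕ) := by
  simp [basis]

lemma basis_mem_grading (m : Fin (n + 1) ⊕ Fin (n + 1)) :
    h.basis hR m ∈ D.alg.grading (Sum.elim (fun i : Fin (n + 1) => (i : ℕ) • (2 : ℤ))
      (fun i : Fin (n + 1) => d + (i : ℕ) • 2) m) := by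
  rcases m with i | i
  · simpa using SetLike.pow_mem_graded (i : ℕ) h.mem
  · simpa using SetLike.mul_mem_graded D.t_mem (SetLike.pow_mem_graded (i : ℕ) h.mem)

end

section

variable {D₁ D₂ : Deformation F R d} {ut₁ : D₁.alg.carrier} {ut₂ : D₂.alg.carrier}
  (hR : IsCPnAlg R u n) (h₁ : IsRAlphaDef R u n d α D₁ ut₁) (h₂ : IsRAlphaDef R u n d α D₂ ut₂)
include hR h₁ h₂

noncomputable def basisEquiv : D₁.alg.carrier ≃ₗ[F] D₂.alg.carrier :=
  (h₁.basis hR).equiv (h₂.basis hR) (Equiv.refl _)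

lemma basisEquiv_basis (m : Fin (n + 1) ⊕ Fin (n + 1)) :
    basisEquiv hR h₁ h₂ (h₁.basis hR m) = h₂.basis hR m :=
  Module.Basis.equiv_apply ..

lemma basisEquiv_t_mul_pow (a : ℕ) : basisEquiv hR h₁ h₂ (D₁.t * ut₁ ^ a) = D₂.t * ut₂ ^ a := by
  rcases le_or_gt a n with ha | ha
  · simpa using basisEquiv_basis hR h₁ h₂ (.inr ⟨a, by omega⟩)
  · obtain ⟨m, rfl⟩ := Nat.exists_eq_add_of_le ha
    rw [h₁.t_mul_pow_add_eq_zero, h₂.t_mul_pow_add_eq_zero, map_zero]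

lemma basisEquiv_pow (a : ℕ) : basisEquiv hR h₁ h₂ (ut₁ ^ a) = ut₂ ^ a := by
  rcases le_or_gt a n with ha | ha
  · simpa using basisEquiv_basis hR h₁ h₂ (.inl ⟨a, by omega⟩)
  · obtain ⟨m, rfl⟩ := Nat.exists_eq_add_of_le ha
    rw [h₁.pow_add_eq, h₂.pow_add_eq, map_neg, map_smul, basisEquiv_t_mul_pow]

lemma basisEquiv_mul (x y : D₁.alg.carrier) :
    basisEquiv hR h₁ h₂ (x * y) = basisEquiv hR h₁ h₂ x * basisEquiv hR h₁ h₂ y := by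
  set e := (basisEquiv hR h₁ h₂).toLinearMap
  suffices (LinearMap.mul F _).compr₂ e = (LinearMap.mul F _).compl₁₂ e e by
    simpa [e] using LinearMap.congr_fun₂ this x y
  have hc₁ := D₁.commute_t_of_mem_grading even_two h₁.mem
  have hc₂ := D₂.commute_t_of_mem_grading even_two h₂.mem
  refine LinearMap.ext_basis (h₁.basis hR) (h₁.basis hR) ?_
  rintro (i | i) (j | j)
  all_goals simp only [LinearMap.compr₂_apply, LinearMap.compl₁₂_apply, LinearMap.mul_apply',
    basis_inl, basis_inr, e, LinearEquiv.coe_coe]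
  · rw [← pow_add, basisEquiv_pow, basisEquiv_pow, basisEquiv_pow, pow_add]
  · rw [hc₁.pow_mul_mul_pow, basisEquiv_pow, basisEquiv_t_mul_pow, basisEquiv_t_mul_pow,
      hc₂.pow_mul_mul_pow]
  · rw [mul_assoc, ← pow_add, basisEquiv_pow, basisEquiv_t_mul_pow, basisEquiv_t_mul_pow,
      mul_assoc, ← pow_add]
  · rw [hc₁.mul_pow_mul_mul_pow_eq_zero D₁.t_sq, basisEquiv_t_mul_pow, basisEquiv_t_mul_pow,
      hc₂.mul_pow_mul_mul_pow_eq_zero D₂.t_sq, map_zero]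

lemma basisEquiv_mem_grading {m : ℤ} {x : D₁.alg.carrier} (hx : x ∈ D₁.alg.grading m) :
    basisEquiv hR h₁ h₂ x ∈ D₂.alg.grading m :=
  GradedFAlg.map_mem_grading_of_basis (h₁.basis hR) (h₁.basis_mem_grading hR)
    (basisEquiv hR h₁ h₂).toLinearMap
    (fun i => by simpa [basisEquiv_basis] using h₂.basis_mem_grading hR i) hx

lemma j_basisEquiv (x : D₁.alg.carrier) :
    D₂.j.toAlgHom (basisEquiv hR h₁ h₂ x) = D₁.j.toAlgHom x := by
  suffices D₂.j.toAlgHom.toLinearMap ∘ₗ (basisEquiv hR h₁ h₂).toLinearMap =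
      D₁.j.toAlgHom.toLinearMap from LinearMap.congr_fun this x
  refine (h₁.basis hR).ext fun m => ?_
  rcases m with i | i
  · simp [basisEquiv_pow, h₁.j_u, h₂.j_u]
  · simp [basisEquiv_t_mul_pow, Deformation.j_t]

noncomputable def defMorphism : DefMorphismOver (GradedFAlg.Hom.id R) D₁ D₂ where
  toHom :=
    ⟨AlgHom.ofLinearMap (basisEquiv hR h₁ h₂).toLinearMap
      (by simpa using basisEquiv_pow hR h₁ h₂ 0) (basisEquiv_mul hR h₁ h₂),
      fun _ _ => basisEquiv_mem_grading hR h₁ h₂⟩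
  map_t := by simpa using basisEquiv_t_mul_pow hR h₁ h₂ 0
  over' := j_basisEquiv hR h₁ h₂

lemma iso : D₁.Iso D₂ :=
  ⟨defMorphism hR h₁ h₂, (basisEquiv hR h₁ h₂).bijective⟩

end

end IsRAlphaDef

theorem Ralpha_iso_Rbeta_iff_eq_general
    {F : Type} [Field F] (R : GradedFAlg F) (u : R.carrier) (n : ℕ)
    (hR : IsCPnAlg R u n)
    (d : ℤ) (hd4 : 4 ≤ d) (α β : F)
    (D1 D2 : Deformation F R d) (ut1 : D1.alg.carrier) (ut2 : D2.alg.carrier)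
    (h1 : IsRAlphaDef R u n d α D1 ut1) (h2 : IsRAlphaDef R u n d β D2 ut2) :
    Deformation.Iso D1 D2 ↔ α = β := by
  constructor
  · rintro ⟨φ, -⟩
    exact h1.eq_of_morphism hR h2 (by omega) φ
  · rintro rfl
    exact h1.iso hR h2

/-- Let `R = F[u]/(u^{n+1})` with `deg u = 2`, `n ≥ 1`, and let
`d` be even with `4 ≤ d ≤ 2n+2` (so `d ≠ 2`). For `α, β ∈ F`, the deformations
`(R̃_α, t, j)` and `(R̃_β, t, j)` of `R` are isomorphic as deformations of `R`
if and only if `α = β`. -/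
theorem Ralpha_iso_Rbeta_iff_eq
    {F : Type} [Field F] (R : GradedFAlg F) (u : R.carrier) (n : ℕ) (hn : 1 ≤ n)
    (hR : IsCPnAlg R u n)
    (d : ℤ) (heven : Even d) (hd4 : 4 ≤ d) (hd : d ≤ 2 * (n : ℤ) + 2) (α β : F)
    (D1 D2 : Deformation F R d) (ut1 : D1.alg.carrier) (ut2 : D2.alg.carrier)
    (h1 : IsRAlphaDef R u n d α D1 ut1) (h2 : IsRAlphaDef R u n d β D2 ut2) :
    Deformation.Iso D1 D2 ↔ α = β :=
  Ralpha_iso_Rbeta_iff_eq_general R u n hR d hd4 α β D1 D2 ut1 ut2 h1 h2
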